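/- Let n ≥ 3 be an integer and k a field whose characteristic is either zero or a prime p not dividing n!/2. Let W₁ₙ = {w : Fin (n+1) → k | ∑ i, w i = 0} with the alternating group 𝔞_{n+1} = alternatingGroup (Fin (n+1)) acting by (σ • w) i = w (σ⁻¹ i), and let G' = {σ ∈ 𝔞_{n+1} | σ 0 = 0} be the stabilizer of the index 0. Then for every integer m with 1 < m < n-1, the only element of the m-th exterior power ⋀^m W₁ₙ fixed by the induced action of every element of G' is 0. -/

import Mathlib

open scoped BigOperators

set_option synthInstance.maxHeartbeats 1000000
set_option maxHeartbeats 1000000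

/-- The sum-zero subspace `W₁ₙ = {w : Fin (n+1) → k | ∑ i, w i = 0}` of `k^(n+1)`. -/
def W1 (k : Type*) [Field k] (n : ℕ) : Submodule k (Fin (n + 1) → k) where
  carrier := {w | ∑ i, w i = 0}
  add_mem' := by
    intro a b ha hb
    simp only [Set.mem_setOf_eq, Pi.add_apply, Finset.sum_add_distrib] at *
    rw [ha, hb, add_zero]
  zero_mem' := by simp
  smul_mem' := by
    intro c a ha
    simp only [Set.mem_setOf_eq, Pi.smul_apply, smul_eq_mul, ← Finset.mul_sum] at *
    rw [ha, mul_zero]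

/-- The `k`-linear action of a permutation `σ` of the coordinates on `W₁ₙ`,
given by `(σ • w) i = w (σ⁻¹ i)`. -/
def actW (k : Type*) [Field k] (n : ℕ) (σ : Equiv.Perm (Fin (n + 1))) :
    W1 k n →ₗ[k] W1 k n where
  toFun w := ⟨fun i => (w : Fin (n + 1) → k) (σ⁻¹ i), by
    show ∑ i, (w : Fin (n + 1) → k) (σ⁻¹ i) = 0
    rw [Equiv.sum_comp σ⁻¹ (w : Fin (n + 1) → k)]
    exact w.2⟩
  map_add' a b := rfl
  map_smul' c a := rfl

/-!
Let `G'` be the stabilizer of `0` in the alternating group. Since `|G'| = n!/2` is invertible in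
`k`, the averaging operator of `G'` is the identity on `G'`-fixed vectors. On the other hand
`⋀^m W₁ₙ` is spanned by wedges of the basis vectors `e_j = δ_{j+1} - δ_0`, and as `2 ≤ m` and
`m + 2 ≤ n` each such wedge is negated by an even permutation fixing `0`: swap two of its
indices and two indices it does not involve. As `char k ≠ 2`, the average of every wedge vanishes.
-/

open Equiv

namespace Representation

variable {k G V : Type*} [Field k] [Group G] [AddCommGroup V] [Module k V]
  (ρ : Representation k G V)

theorem averageMap_comp [Fintype G] [Invertible (Fintype.card G : k)] (g : G) :
    ρ.averageMap ∘ₗ ρ g = ρ.averageMap := by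
  rw [averageMap, ← asAlgebraHom_single_one, ← Module.End.mul_eq_comp, ← map_mul,
    GroupAlgebra.mul_average_right]

theorem averageMap_eq_zero_of_apply_eq_neg [Fintype G] [Invertible (Fintype.card G : k)]
    (h2 : (2 : k) ≠ 0) {g : G} {v : V} (hv : ρ g v = -v) : ρ.averageMap v = 0 := by
  have h : ρ.averageMap v = -ρ.averageMap v := by
    rw [← map_neg, ← hv, ← LinearMap.comp_apply, averageMap_comp]
  have : (2 : k) • ρ.averageMap v = 0 := by
    rw [two_smul]
    exact eq_neg_iff_add_eq_zero.mp h
  exact (smul_eq_zero.mp this).resolve_left h2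

theorem eq_zero_of_mem_invariants_of_mem_span [Finite G] (hG : (Nat.card G : k) ≠ 0)
    (h2 : (2 : k) ≠ 0) {s : Set V} (hs : ∀ v ∈ s, ∃ g, ρ g v = -v) {x : V}
    (hxs : x ∈ Submodule.span k s) (hx : x ∈ ρ.invariants) : x = 0 := by
  have := Fintype.ofFinite G
  have : Invertible (Fintype.card G : k) :=
    invertibleOfNonzero (by rwa [← Nat.card_eq_fintype_card])
  have hker : Submodule.span k s ≤ LinearMap.ker ρ.averageMap := by
    refine Submodule.span_le.mpr fun v hv => ?_
    obtain ⟨g, hg⟩ := hs v hv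
    exact ρ.averageMap_eq_zero_of_apply_eq_neg h2 hg
  rw [← ρ.averageMap_id x hx]
  exact hker hxs

end Representation

theorem ExteriorAlgebra.span_range_ιMulti_comp_basis {R M ι : Type*} [CommRing R]
    [AddCommGroup M] [Module R M] (b : Module.Basis ι R M) (m : ℕ) :
    Submodule.span R (Set.range fun f : Fin m → ι => ιMulti R m (b ∘ f)) = ⋀[R]^m M := by
  rw [← exteriorPower.ιMulti_span_fixedDegree_of_span_eq_top R m M b.span_eq]
  congr 1
  ext y
  simp only [Set.mem_range, Set.mem_image, Set.mem_ofPred_eq,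
    Set.range_subset_range_iff_exists_comp]
  constructor
  · rintro ⟨f, rfl⟩
    exact ⟨b ∘ f, ⟨f, rfl⟩, rfl⟩
  · rintro ⟨_, ⟨f, rfl⟩, rfl⟩
    exact ⟨f, rfl⟩

theorem exists_ne_notMem_range_of_card_add_two_le {α β : Type*} [Fintype α] [Fintype β]
    {f : α → β} (h : Fintype.card α + 2 ≤ Fintype.card β) :
    ∃ c d, c ≠ d ∧ c ∉ Set.range f ∧ d ∉ Set.range f := by
  classical
  have hcard : 1 < (Finset.univ.image f)ᶜ.card := by
    rw [Finset.card_compl]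
    have := Finset.card_image_le (s := Finset.univ) (f := f)
    rw [Finset.card_univ] at this
    omega
  obtain ⟨c, hc, d, hd, hcd⟩ := Finset.one_lt_card.mp hcard
  simp only [Finset.mem_compl, Finset.mem_image, Finset.mem_univ, true_and] at hc hd
  exact ⟨c, d, hcd, hc, hd⟩

theorem nat_card_stabilizer_alternatingGroup {α : Type*} [Fintype α] [DecidableEq α]
    (h : 3 ≤ Nat.card α) (a : α) :
    Nat.card (MulAction.stabilizer (alternatingGroup α) a) = (Nat.card α - 1).factorial / 2 := by
  have := alternatingGroup.isPretransitive_of_three_le_card α h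
  have : Nontrivial α := Finite.one_lt_card_iff_nontrivial.mp (by omega)
  have hcard := (MulAction.stabilizer (alternatingGroup α) a).card_mul_index
  rw [MulAction.index_stabilizer_of_transitive] at hcard
  have h2 := two_mul_nat_card_alternatingGroup (α := α)
  rw [← hcard, Nat.card_perm, ← Nat.sub_one_add_one_eq_of_pos (by omega : 0 < Nat.card α),
    Nat.factorial_succ, ← mul_assoc, mul_comm _ (_ + 1)] at h2
  exact Nat.eq_div_of_mul_eq_right two_ne_zero (Nat.eq_of_mul_eq_mul_left (by omega) h2)

theorem natCast_ne_zero_of_charZero_or_not_dvd {k : Type*} [Field k] {N : ℕ} (hN : N ≠ 0)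
    (hchar : CharZero k ∨ ∃ p : ℕ, p.Prime ∧ CharP k p ∧ ¬ p ∣ N) : (N : k) ≠ 0 := by
  rcases hchar with _ | ⟨p, -, _, hp⟩
  · exact Nat.cast_ne_zero.mpr hN
  · exact fun h => hp ((CharP.cast_eq_zero_iff k p N).mp h)

namespace W1

variable (k : Type*) [Field k] (n : ℕ)

def equivFun : W1 k n ≃ₗ[k] (Fin n → k) where
  toFun w i := (w : Fin (n + 1) → k) i.succ
  map_add' _ _ := rfl
  map_smul' _ _ := rfl
  invFun v := ⟨Fin.cons (-∑ i, v i) v, by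
    show ∑ i, Fin.cons (-∑ i, v i) v i = 0
    simp [Fin.sum_univ_succ]⟩
  left_inv w := by
    have hw : ∑ i, (w : Fin (n + 1) → k) i = 0 := w.2
    rw [Fin.sum_univ_succ] at hw
    ext i
    refine Fin.cases ?_ (fun j => ?_) i
    · simp only [Fin.cons_zero]
      linear_combination -hw
    · simp only [Fin.cons_succ]
  right_inv _ := rfl

noncomputable def basis : Module.Basis (Fin n) k (W1 k n) :=
  Module.Basis.ofEquivFun (equivFun k n)

variable {k n}

theorem coe_basis (j : Fin n) :
    (basis k n j : Fin (n + 1) → k) = Fin.cons (-1) (Pi.single j 1) := by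
  rw [basis, Module.Basis.coe_ofEquivFun]
  show (Fin.cons (-∑ i, Pi.single j (1 : k) i) (Pi.single j 1) : Fin (n + 1) → k) = _
  simp

end W1

section Action

variable (k : Type*) [Field k] (n : ℕ)

theorem actW_one : actW k n 1 = LinearMap.id := rfl

theorem actW_mul (σ τ : Perm (Fin (n + 1))) : actW k n (σ * τ) = actW k n σ ∘ₗ actW k n τ := by
  ext w i
  simp [actW, mul_inv_rev]

theorem actW_swap_succ_basis (a b j : Fin n) :
    actW k n (swap a.succ b.succ) (W1.basis k n j) = W1.basis k n (swap a b j) := by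
  ext i
  refine Fin.cases ?_ (fun i => ?_) i
  · simp [actW, W1.coe_basis, swap_apply_of_ne_of_ne (Fin.succ_ne_zero a).symm
      (Fin.succ_ne_zero b).symm]
  · simp [actW, W1.coe_basis, (Fin.succ_injective n).swap_apply, Pi.single_apply,
      swap_apply_eq_iff]

noncomputable def exteriorRep :
    Representation k (Perm (Fin (n + 1))) (ExteriorAlgebra k (W1 k n)) where
  toFun σ := (ExteriorAlgebra.map (actW k n σ)).toLinearMap
  map_one' := by rw [actW_one, ExteriorAlgebra.map_id]; rfl
  map_mul' σ τ := by rw [actW_mul, ← ExteriorAlgebra.map_comp_map]; rfl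

variable {k n}

theorem exteriorRep_apply (σ : Perm (Fin (n + 1))) (x : ExteriorAlgebra k (W1 k n)) :
    exteriorRep k n σ x = ExteriorAlgebra.map (actW k n σ) x := rfl

theorem exteriorRep_swap_mul_swap_ιMulti {m : ℕ} {f : Fin m → Fin n}
    (hf : Function.Injective f) {i j : Fin m} (hij : i ≠ j) {c d : Fin n}
    (hc : c ∉ Set.range f) (hd : d ∉ Set.range f) :
    exteriorRep k n (swap (f i).succ (f j).succ * swap c.succ d.succ)
        (ExteriorAlgebra.ιMulti k m (W1.basis k n ∘ f)) =
      -ExteriorAlgebra.ιMulti k m (W1.basis k n ∘ f) := by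
  have hperm : actW k n (swap (f i).succ (f j).succ * swap c.succ d.succ) ∘ W1.basis k n ∘ f =
      W1.basis k n ∘ f ∘ swap i j := by
    ext1 l
    have hcl : f l ≠ c := fun h => hc ⟨l, h⟩
    have hdl : f l ≠ d := fun h => hd ⟨l, h⟩
    simp [actW_mul, actW_swap_succ_basis, swap_apply_of_ne_of_ne hcl hdl, hf.swap_apply]
  rw [exteriorRep_apply, ExteriorAlgebra.map_apply_ιMulti, hperm, ← Function.comp_assoc,
    AlternatingMap.map_swap _ _ hij]

end Action

theorem exists_mem_stabilizer_exteriorRep_ιMulti_eq_neg {k : Type*} [Field k] {n m : ℕ}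
    (hm : 2 ≤ m) (hmn : m + 2 ≤ n) (f : Fin m → Fin n) :
    ∃ σ : MulAction.stabilizer (alternatingGroup (Fin (n + 1))) (0 : Fin (n + 1)),
      exteriorRep k n σ (ExteriorAlgebra.ιMulti k m (W1.basis k n ∘ f)) =
        -ExteriorAlgebra.ιMulti k m (W1.basis k n ∘ f) := by
  by_cases hf : Function.Injective f
  swap
  · refine ⟨1, ?_⟩
    rw [AlternatingMap.map_eq_zero_of_not_injective _ _ fun h => hf h.of_comp, map_zero,
      neg_zero]
  obtain ⟨c, d, hcd, hc, hd⟩ := exists_ne_notMem_range_of_card_add_two_le (f := f)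
    (by simpa using hmn)
  let i : Fin m := ⟨0, by omega⟩
  let j : Fin m := ⟨1, by omega⟩
  have hij : i ≠ j := by simp [i, j, Fin.ext_iff]
  have hsign : Perm.sign (swap (f i).succ (f j).succ * swap c.succ d.succ) = 1 := by
    rw [map_mul, Perm.sign_swap (by simpa using hf.ne hij), Perm.sign_swap (by simpa using hcd)]
    decide
  have hfix : (swap (f i).succ (f j).succ * swap c.succ d.succ) 0 = 0 := by
    rw [Perm.mul_apply, swap_apply_of_ne_of_ne (Fin.succ_ne_zero c).symm (Fin.succ_ne_zero d).symm,
      swap_apply_of_ne_of_ne (Fin.succ_ne_zero _).symm (Fin.succ_ne_zero _).symm]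
  exact ⟨⟨⟨_, Perm.mem_alternatingGroup.mpr hsign⟩, hfix⟩,
    exteriorRep_swap_mul_swap_ιMulti hf hij hc hd⟩

theorem exteriorPower_stabilizer_fixed_eq_zero_general
    {k : Type*} [Field k] (n : ℕ)
    (hchar : CharZero k ∨ ∃ p : ℕ, p.Prime ∧ CharP k p ∧ ¬ p ∣ n.factorial / 2)
    (m : ℕ) (hm1 : 1 < m) (hmn : m < n - 1)
    (x : ExteriorAlgebra k (W1 k n)) (hx : x ∈ ⋀[k]^m (W1 k n))
    (hfix : ∀ σ : Equiv.Perm (Fin (n + 1)), σ ∈ alternatingGroup (Fin (n + 1)) → σ 0 = 0 →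
      ExteriorAlgebra.map (actW k n σ) x = x) :
    x = 0 := by
  let G := MulAction.stabilizer (alternatingGroup (Fin (n + 1))) (0 : Fin (n + 1))
  let ρ : Representation k G (ExteriorAlgebra k (W1 k n)) :=
    (exteriorRep k n).comp ((alternatingGroup (Fin (n + 1))).subtype.comp G.subtype)
  have hcard : (n.factorial / 2 : ℕ) ≠ 0 :=
    (Nat.div_pos (le_trans (by omega) (Nat.self_le_factorial n)) two_pos).ne'
  have hG : (Nat.card G : k) ≠ 0 := by
    rw [nat_card_stabilizer_alternatingGroup (by rw [Nat.card_fin]; omega), Nat.card_fin,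
      Nat.add_sub_cancel]
    exact natCast_ne_zero_of_charZero_or_not_dvd hcard hchar
  -- `2 ∣ n!/2` because `n ≥ 4`, so the characteristic is not `2` either.
  have h2 : (2 : k) ≠ 0 := by
    obtain ⟨t, ht⟩ : 2 ∣ n.factorial / 2 :=
      Nat.dvd_div_of_mul_dvd (Nat.dvd_factorial (by norm_num : 0 < 4) (by omega))
    intro h
    apply natCast_ne_zero_of_charZero_or_not_dvd hcard hchar
    rw [ht, Nat.cast_mul, Nat.cast_two, h, zero_mul]
  refine ρ.eq_zero_of_mem_invariants_of_mem_span hG h2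
    (s := Set.range fun f : Fin m → Fin n => ExteriorAlgebra.ιMulti k m (W1.basis k n ∘ f))
    ?_ ?_ fun σ => hfix _ σ.1.2 σ.2
  · rintro _ ⟨f, rfl⟩
    exact exists_mem_stabilizer_exteriorRep_ιMulti_eq_neg (by omega) (by omega) f
  · rwa [ExteriorAlgebra.span_range_ιMulti_comp_basis]

/-- For `n ≥ 3` and a field `k` of characteristic zero or a prime `p` not dividing `n!/2`,
for every `1 < m < n - 1` the only element of `⋀^m W₁ₙ` fixed by (the functorial action of)
every element of the stabilizer `G' = {σ ∈ 𝔞_{n+1} | σ 0 = 0}` is `0`. -/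
theorem exteriorPower_stabilizer_fixed_eq_zero
    {k : Type*} [Field k] (n : ℕ) (hn : 3 ≤ n)
    (hchar : CharZero k ∨ ∃ p : ℕ, p.Prime ∧ CharP k p ∧ ¬ p ∣ n.factorial / 2)
    (m : ℕ) (hm1 : 1 < m) (hmn : m < n - 1)
    (x : ExteriorAlgebra k (W1 k n)) (hx : x ∈ ⋀[k]^m (W1 k n))
    (hfix : ∀ σ : Equiv.Perm (Fin (n + 1)), σ ∈ alternatingGroup (Fin (n + 1)) → σ 0 = 0 →
      ExteriorAlgebra.map (actW k n σ) x = x) :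
    x = 0 :=
  exteriorPower_stabilizer_fixed_eq_zero_general n hchar m hm1 hmn x hx hfix
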